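/- arXiv:1710.03580 — 5 statements merged into one kernel-verified Lean document; each statement's English description precedes it below -/
import Mathlib

section
/- Assume condition (E) and φ(z) = z + b with b ∈ ℂ. If C_φ is bounded on H(E,β), then Re(b) ≥ 0. (Proof idea: the unit vectors q_k(z) = β_k^{-1} e^{-λ_k z} satisfy ‖C_φ q_k‖ = e^{-λ_k Re(b)}, and since λ_k → +∞, boundedness of (‖C_φ q_k‖) forces Re(b) ≥ 0.) -/
open Filter Complex

/- Testing boundedness on a single exponential `e^{-λ_k z}` shows that a bounded diagonal
operator on a weighted `ℓ²` space has bounded diagonal. Here the diagonal entries are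
`|e^{-λ_k b}|² = e^{-2 λ_k Re b}`, unbounded when `Re b < 0` because `λ_k → ∞`. -/

theorem norm_sq_le_of_weighted_diagonal_bound {β : ℕ → ℝ} {w : ℕ → ℂ} {C : ℝ}
    (hbdd : ∀ a : ℕ → ℂ, Summable (fun n => ‖a n‖ ^ 2 * β n ^ 2) →
      ∑' n, ‖a n * w n‖ ^ 2 * β n ^ 2 ≤ C * ∑' n, ‖a n‖ ^ 2 * β n ^ 2)
    {k : ℕ} (hk : β k ≠ 0) : ‖w k‖ ^ 2 ≤ C := by
  have tsum_single : ∀ v : ℕ → ℂ,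
      ∑' n, ‖(Pi.single k 1 : ℕ → ℂ) n * v n‖ ^ 2 * β n ^ 2 = ‖v k‖ ^ 2 * β k ^ 2 := fun v => by
    rw [tsum_eq_single k fun n hn => by simp [Pi.single_eq_of_ne hn]]
    simp
  have hsum : Summable (fun n => ‖(Pi.single k 1 : ℕ → ℂ) n‖ ^ 2 * β n ^ 2) :=
    summable_of_ne_finset_zero (s := {k}) fun n hn => by
      simp [Pi.single_eq_of_ne (Finset.notMem_singleton.mp hn)]
  have h := hbdd (Pi.single k 1) hsum
  have hnorm := tsum_single 1
  simp only [Pi.one_apply, mul_one, norm_one, one_pow, one_mul] at hnorm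
  rw [tsum_single w, hnorm] at h
  exact le_of_mul_le_mul_right h (by positivity)

theorem norm_exp_neg_ofReal_mul_sq (t : ℝ) (b : ℂ) :
    ‖exp (-(t : ℂ) * b)‖ ^ 2 = Real.exp (-2 * b.re * t) := by
  rw [norm_exp, ← Real.exp_nat_mul]
  congr 1
  simp only [neg_mul, neg_re, mul_re, ofReal_re, ofReal_im, zero_mul, sub_zero, Nat.cast_ofNat]
  ring

theorem stmt_12_general (Λ : ℕ → ℝ) (β : ℕ → ℝ) (b : ℂ)
    (htop : Tendsto Λ atTop atTop)
    (hβ : ∀ n, 0 < β n)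
    (hbdd : ∃ C : ℝ, ∀ a : ℕ → ℂ, Summable (fun n => ‖a n‖ ^ 2 * (β n) ^ 2) →
      Summable (fun n => ‖a n * Complex.exp (-(Λ n : ℂ) * b)‖ ^ 2 * (β n) ^ 2) ∧
      ∑' n, ‖a n * Complex.exp (-(Λ n : ℂ) * b)‖ ^ 2 * (β n) ^ 2
        ≤ C * ∑' n, ‖a n‖ ^ 2 * (β n) ^ 2) :
    0 ≤ b.re := by
  obtain ⟨C, hC⟩ := hbdd
  have hbound : ∀ k, Real.exp (-2 * b.re * Λ k) ≤ C := fun k => by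
    rw [← norm_exp_neg_ofReal_mul_sq]
    exact norm_sq_le_of_weighted_diagonal_bound (fun a ha => (hC a ha).2) (hβ k).ne'
  by_contra! hb
  have hgrow : Tendsto (fun k => Real.exp (-2 * b.re * Λ k)) atTop atTop :=
    Real.tendsto_exp_atTop.comp (htop.const_mul_atTop (by linarith))
  obtain ⟨k, hk⟩ := (hgrow.eventually_gt_atTop C).exists
  exact (hbound k).not_gt hk

/-- Under condition (E), for `φ(z) = z + b`: if `C_φ` is bounded on `H(E,β)`
(there is `C` such that for every `f ∈ H(E,β)`, the transformed coefficient sequence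
`a_n e^{-λ_n b}` is in `H(E,β)` with `‖C_φ f‖² ≤ C ‖f‖²`), then `Re b ≥ 0`. -/
theorem stmt_12 (Λ : ℕ → ℝ) (β : ℕ → ℝ) (b : ℂ)
    (hmono : StrictMono Λ) (hpos : ∀ n, 0 ≤ Λ n)
    (htop : Tendsto Λ atTop atTop)
    (hL : IsBoundedUnder (· ≤ ·) atTop (fun n : ℕ => Real.log ((n : ℝ) + 1) / Λ n))
    (hβ : ∀ n, 0 < β n)
    (hE : Tendsto (fun n => Real.log (β n) / Λ n) atTop atTop)
    (hbdd : ∃ C : ℝ, ∀ a : ℕ → ℂ, Summable (fun n => ‖a n‖ ^ 2 * (β n) ^ 2) →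
      Summable (fun n => ‖a n * Complex.exp (-(Λ n : ℂ) * b)‖ ^ 2 * (β n) ^ 2) ∧
      ∑' n, ‖a n * Complex.exp (-(Λ n : ℂ) * b)‖ ^ 2 * (β n) ^ 2
        ≤ C * ∑' n, ‖a n‖ ^ 2 * (β n) ^ 2) :
    0 ≤ b.re :=
  stmt_12_general Λ β b htop hβ hbdd
end

section
/- Assume condition (E) with λ_1 > 0. Suppose φ is entire and there exists B > 0 such that Σ_{n≥1} β_n^{-2} e^{-2λ_n Re(φ(w))} ≤ B Σ_{n≥1} β_n^{-2} e^{-2λ_n Re(w)} for all w ∈ ℂ. Then φ(z) = z + b for some constant b ∈ ℂ. (That is, z - φ(z) must be constant.) -/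
open Filter Complex

/-!
Under (E) the kernel series `S(x) = Σ β_n⁻² e^{-2λ_n x}` converges for every real `x`, and since
`λ_n ≥ λ_1 > 0` shifting `x` down by `d ≥ 0` multiplies it by at least `e^{2λ_1 d}`. The hypothesis
`S(Re φ(w)) ≤ B S(Re w)` therefore bounds `Re (w - φ(w))` from above by `log B / (2λ_1)`, so the entire
function `e^{z - φ(z)}` is bounded; by Liouville it is constant, and then so is `z - φ(z)`.
-/

theorem Differentiable.exists_const_forall_eq_of_re_le {f : ℂ → ℂ} (hf : Differentiable ℂ f)
    {C : ℝ} (hC : ∀ z, (f z).re ≤ C) : ∃ c, ∀ z, f z = c := by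
  have hexp_bdd : Bornology.IsBounded (Set.range fun z => Complex.exp (f z)) := by
    refine (Metric.isBounded_iff_subset_closedBall 0).2 ⟨Real.exp C, ?_⟩
    rintro _ ⟨z, rfl⟩
    simpa [norm_exp] using hC z
  have hexp_const : ∀ z, Complex.exp (f z) = Complex.exp (f 0) :=
    fun z => hf.cexp.apply_eq_apply_of_bounded hexp_bdd z 0
  have hderiv : ∀ z, _root_.deriv f z = 0 := by
    intro z
    have hzero : _root_.deriv (fun z => Complex.exp (f z)) z = 0 := by
      rw [funext hexp_const, deriv_const]
    rw [((hf z).hasDerivAt.cexp).deriv] at hzero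
    exact (mul_eq_zero.mp hzero).resolve_left (Complex.exp_ne_zero _)
  exact ⟨f 0, fun z => is_const_of_deriv_eq_zero hf hderiv z 0⟩

/-- `kernelNormSq Λ β (Re w) = ‖k_w‖²` in `H(E, β)`. -/
noncomputable def kernelNormSq (Λ β : ℕ → ℝ) (x : ℝ) : ℝ :=
  ∑' n, Real.exp (-2 * Λ n * x) / β n ^ 2

section KernelSeries

variable {Λ β : ℕ → ℝ}

theorem eventually_log_succ_le (hΛ : ∀ n, 0 < Λ n)
    (hL : IsBoundedUnder (· ≤ ·) atTop (fun n : ℕ => Real.log ((n : ℝ) + 1) / Λ n))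
    (hE : Tendsto (fun n => Real.log (β n) / Λ n) atTop atTop) (x : ℝ) :
    ∀ᶠ n : ℕ in atTop, Real.log ((n : ℝ) + 1) ≤ Λ n * x + Real.log (β n) := by
  obtain ⟨M, hM⟩ := hL
  filter_upwards [eventually_map.1 hM, hE.eventually_ge_atTop (|x| + M)] with n hlog hβn
  rw [div_le_iff₀ (hΛ n)] at hlog
  rw [le_div_iff₀ (hΛ n)] at hβn
  nlinarith [neg_abs_le x, hΛ n]

theorem summable_kernel (hΛ : ∀ n, 0 < Λ n)
    (hL : IsBoundedUnder (· ≤ ·) atTop (fun n : ℕ => Real.log ((n : ℝ) + 1) / Λ n))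
    (hβ : ∀ n, 0 < β n) (hE : Tendsto (fun n => Real.log (β n) / Λ n) atTop atTop) (x : ℝ) :
    Summable fun n => Real.exp (-2 * Λ n * x) / β n ^ 2 := by
  have hinv_sq : Summable fun n : ℕ => (((n + 1 : ℕ) : ℝ) ^ 2)⁻¹ :=
    (summable_nat_add_iff 1).2 (Real.summable_nat_pow_inv.2 one_lt_two)
  refine hinv_sq.of_norm_bounded_eventually_nat ?_
  filter_upwards [eventually_log_succ_le hΛ hL hE x] with n hn
  have hterm : Real.exp (-2 * Λ n * x) / β n ^ 2
      = Real.exp (-2 * (Λ n * x + Real.log (β n))) := by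
    rw [mul_add, Real.exp_add, div_eq_mul_inv, ← Real.exp_log (pow_pos (hβ n) 2),
      ← Real.exp_neg, Real.log_pow]
    ring_nf
  have hbound : (((n + 1 : ℕ) : ℝ) ^ 2)⁻¹ = Real.exp (-2 * Real.log ((n : ℝ) + 1)) := by
    rw [← Real.exp_log (by positivity : (0 : ℝ) < ((n + 1 : ℕ) : ℝ) ^ 2), ← Real.exp_neg,
      Real.log_pow]
    push_cast
    ring_nf
  rw [Real.norm_of_nonneg (by positivity), hterm, hbound]
  exact Real.exp_le_exp.2 (by linarith)

theorem kernelNormSq_pos (hβ : ∀ n, 0 < β n) {x : ℝ}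
    (hx : Summable fun n => Real.exp (-2 * Λ n * x) / β n ^ 2) : 0 < kernelNormSq Λ β x :=
  hx.tsum_pos (fun _ => by positivity) 0 (div_pos (Real.exp_pos _) (pow_pos (hβ 0) 2))

theorem exp_mul_kernelNormSq_le (hmono : Monotone Λ) {x y : ℝ} (hxy : x ≤ y)
    (hx : Summable fun n => Real.exp (-2 * Λ n * x) / β n ^ 2)
    (hy : Summable fun n => Real.exp (-2 * Λ n * y) / β n ^ 2) :
    Real.exp (2 * Λ 0 * (y - x)) * kernelNormSq Λ β y ≤ kernelNormSq Λ β x := by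
  rw [kernelNormSq, kernelNormSq, ← tsum_mul_left]
  refine (hy.mul_left _).tsum_le_tsum (fun n => ?_) hx
  rw [← mul_div_assoc, ← Real.exp_add]
  gcongr
  nlinarith [hmono (Nat.zero_le n)]

theorem sub_le_of_kernelNormSq_le (hmono : Monotone Λ) (hΛ0 : 0 < Λ 0) (hβ : ∀ n, 0 < β n)
    (hsum : ∀ x, Summable fun n => Real.exp (-2 * Λ n * x) / β n ^ 2) {x y B : ℝ}
    (h : kernelNormSq Λ β x ≤ B * kernelNormSq Λ β y) :
    y - x ≤ max 0 (Real.log B / (2 * Λ 0)) := by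
  rcases le_total y x with hyx | hxy
  · exact le_max_of_le_left (by linarith)
  have hpos := kernelNormSq_pos hβ (hsum y)
  have hexp_le : Real.exp (2 * Λ 0 * (y - x)) ≤ B :=
    le_of_mul_le_mul_right ((exp_mul_kernelNormSq_le hmono hxy (hsum x) (hsum y)).trans h) hpos
  have hB : 0 < B := (Real.exp_pos _).trans_le hexp_le
  refine le_max_of_le_right ((le_div_iff₀ (by positivity)).2 ?_)
  rw [mul_comm]
  exact (Real.le_log_iff_exp_le hB).2 hexp_le

end KernelSeries

theorem stmt_13_general (Λ : ℕ → ℝ) (β : ℕ → ℝ) (φ : ℂ → ℂ) (B : ℝ)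
    (hmono : StrictMono Λ)
    (hL : IsBoundedUnder (· ≤ ·) atTop (fun n : ℕ => Real.log ((n : ℝ) + 1) / Λ n))
    (hβ : ∀ n, 0 < β n)
    (hE : Tendsto (fun n => Real.log (β n) / Λ n) atTop atTop)
    (hΛ0 : 0 < Λ 0)
    (hφ : Differentiable ℂ φ)
    (hineq : ∀ w : ℂ,
      ∑' n, Real.exp (-2 * Λ n * (φ w).re) / (β n) ^ 2
        ≤ B * ∑' n, Real.exp (-2 * Λ n * w.re) / (β n) ^ 2) :
    ∃ b : ℂ, ∀ z : ℂ, φ z = z + b := by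
  have hΛ : ∀ n, 0 < Λ n := fun n => hΛ0.trans_le (hmono.monotone (Nat.zero_le n))
  have hsum := summable_kernel hΛ hL hβ hE
  have hre_le : ∀ z, (z - φ z).re ≤ max 0 (Real.log B / (2 * Λ 0)) := fun z => by
    simpa using sub_le_of_kernelNormSq_le hmono.monotone hΛ0 hβ hsum (hineq z)
  obtain ⟨c, hc⟩ := Differentiable.exists_const_forall_eq_of_re_le (f := fun z => z - φ z)
    (differentiable_id.sub hφ) hre_le
  exact ⟨-c, fun z => by linear_combination -hc z⟩

/-- Under condition (E) with `λ_1 > 0`: if `φ` is entire and there is `B > 0`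
with `Σ β_n⁻² e^{-2 λ_n Re(φ w)} ≤ B Σ β_n⁻² e^{-2 λ_n Re w}` for all `w`
(i.e. `‖k_{φ(w)}‖² ≤ B ‖k_w‖²`), then `φ(z) = z + b` for some constant `b ∈ ℂ`. -/
theorem stmt_13 (Λ : ℕ → ℝ) (β : ℕ → ℝ) (φ : ℂ → ℂ) (B : ℝ)
    (hmono : StrictMono Λ) (hpos : ∀ n, 0 ≤ Λ n)
    (htop : Tendsto Λ atTop atTop)
    (hL : IsBoundedUnder (· ≤ ·) atTop (fun n : ℕ => Real.log ((n : ℝ) + 1) / Λ n))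
    (hβ : ∀ n, 0 < β n)
    (hE : Tendsto (fun n => Real.log (β n) / Λ n) atTop atTop)
    (hΛ0 : 0 < Λ 0)
    (hφ : Differentiable ℂ φ)
    (hB : 0 < B)
    (hineq : ∀ w : ℂ,
      ∑' n, Real.exp (-2 * Λ n * (φ w).re) / (β n) ^ 2
        ≤ B * ∑' n, Real.exp (-2 * Λ n * w.re) / (β n) ^ 2) :
    ∃ b : ℂ, ∀ z : ℂ, φ z = z + b :=
  stmt_13_general Λ β φ B hmono hL hβ hE hΛ0 hφ hineq
end

section
/- Assume condition (E) with λ_1 > 0 and let φ be entire. The composition operator C_φ is bounded on H(E,β) if and only if φ(z) = z + b for some b ∈ ℂ with Re(b) ≥ 0; and in that case the operator norm equals ‖C_φ‖ = e^{-λ_1 Re(b)}. -/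
open Filter Complex

/-- `a` is the coefficient sequence of an element of `H(E,β)`. -/
def InHEb (β : ℕ → ℝ) (a : ℕ → ℂ) : Prop :=
  Summable (fun n => ‖a n‖ ^ 2 * (β n) ^ 2)

/-- The composition operator `C_φ` maps `H(E,β)` into itself with norm bound `C`: each
`f ∈ H(E,β)` has `f ∘ φ` again representable in `H(E,β)` with `‖f ∘ φ‖ ≤ C ‖f‖`. -/
def CompBddBy (Λ β : ℕ → ℝ) (φ : ℂ → ℂ) (C : ℝ) : Prop :=
  ∀ a : ℕ → ℂ, InHEb β a →
    ∃ b : ℕ → ℂ, InHEb β b ∧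
      (∀ z : ℂ, HasSum (fun n => b n * Complex.exp (-(Λ n : ℂ) * z))
        (∑' n, a n * Complex.exp (-(Λ n : ℂ) * φ z))) ∧
      ∑' n, ‖b n‖ ^ 2 * (β n) ^ 2 ≤ C ^ 2 * ∑' n, ‖a n‖ ^ 2 * (β n) ^ 2

/-! Evaluation at `w` is bounded on `H(E,β)` by Cauchy–Schwarz: its reproducing kernel `k_w` has
`‖k_w‖² = K(Re w)` with `K(x) = Σ e^{-2λ_n x} / β_n²`, finite for every `x` by (E). Testing `C_φ`
on `k_{φ(w)}` gives `K(Re φ(w)) ≤ C² K(Re w)`. As `K(x) e^{2λ_1 x}` is nonincreasing, this bounds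
`Re (z - φ(z))` from above, so `e^{z - φ(z)}` is constant by Liouville and `φ(z) = z + b`.
If `Re b < 0`, iterating `K(x + Re b) ≤ C² K(x)` contradicts `K(x) ≥ e^{-2λ_N x} / β_N²` for
`λ_N` large. Finally `K(x) e^{2λ_1 x} → 1 / β_1²` as `x → ∞` yields `C ≥ e^{-λ_1 Re b}`, and
multiplying the coefficients by `e^{-λ_n b}` shows that this bound is attained. -/

theorem summable_exp_mul_div {Λ β : ℕ → ℝ} (hΛ : ∀ n, 0 < Λ n)
    (hL : IsBoundedUnder (· ≤ ·) atTop fun n : ℕ => Real.log ((n : ℝ) + 1) / Λ n)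
    (hβ : ∀ n, 0 < β n) (hE : Tendsto (fun n => Real.log (β n) / Λ n) atTop atTop) (t : ℝ) :
    Summable fun n => Real.exp (Λ n * t) / β n := by
  obtain ⟨L, hL⟩ := hL
  have hsq : Summable fun n : ℕ => 1 / ((n : ℝ) + 1) ^ 2 := by
    simpa using (summable_nat_add_iff 1).2 (Real.summable_one_div_nat_pow.2 one_lt_two)
  refine Summable.of_norm_bounded_eventually_nat hsq ?_
  filter_upwards [eventually_map.1 hL, hE.eventually_ge_atTop (t + 2 * L)] with n hlog hlogβ
  rw [div_le_iff₀ (hΛ n)] at hlog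
  rw [le_div_iff₀ (hΛ n)] at hlogβ
  have hn : (0 : ℝ) < n + 1 := by positivity
  calc ‖Real.exp (Λ n * t) / β n‖ = Real.exp (Λ n * t - Real.log (β n)) := by
        rw [Real.exp_sub, Real.exp_log (hβ n), Real.norm_of_nonneg (by positivity [hβ n])]
    _ ≤ Real.exp (-(2 * Real.log ((n : ℝ) + 1))) := Real.exp_le_exp.2 (by nlinarith)
    _ = 1 / ((n : ℝ) + 1) ^ 2 := by
        rw [Real.exp_neg, ← Real.exp_log (pow_pos hn 2), Real.log_pow, one_div]
        norm_num

theorem summable_mul_and_sq_tsum_mul_le {ι : Type*} {f g : ι → ℝ} (hf : ∀ i, 0 ≤ f i)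
    (hg : ∀ i, 0 ≤ g i) (hf2 : Summable fun i => f i ^ 2) (hg2 : Summable fun i => g i ^ 2) :
    Summable (fun i => f i * g i) ∧
      (∑' i, f i * g i) ^ 2 ≤ (∑' i, f i ^ 2) * ∑' i, g i ^ 2 := by
  have key := Real.summable_and_inner_le_Lp_mul_Lq_tsum_of_nonneg Real.HolderConjugate.two_two
    hf hg (by simpa using hf2) (by simpa using hg2)
  simp only [Real.rpow_two] at key
  rw [← Real.sqrt_eq_rpow, ← Real.sqrt_eq_rpow] at key
  refine ⟨key.1, ?_⟩
  calc (∑' i, f i * g i) ^ 2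
      ≤ (√(∑' i, f i ^ 2) * √(∑' i, g i ^ 2)) ^ 2 :=
        pow_le_pow_left₀ (tsum_nonneg fun i => mul_nonneg (hf i) (hg i)) key.2 2
    _ = (∑' i, f i ^ 2) * ∑' i, g i ^ 2 := by
        rw [mul_pow, Real.sq_sqrt (tsum_nonneg fun i => sq_nonneg _),
          Real.sq_sqrt (tsum_nonneg fun i => sq_nonneg _)]

theorem norm_mul_cexp (c : ℂ) (t : ℝ) (w : ℂ) :
    ‖c * cexp (-(t : ℂ) * w)‖ = ‖c‖ * Real.exp (-(t * w.re)) := by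
  simp [Complex.norm_exp]

theorem eq_add_apply_zero_of_re_sub_le {φ : ℂ → ℂ} (hφ : Differentiable ℂ φ) {M : ℝ}
    (hM : ∀ z, (z - φ z).re ≤ M) (z : ℂ) : φ z = z + φ 0 := by
  have hexp : Differentiable ℂ fun z => cexp (z - φ z) := (differentiable_id.sub hφ).cexp
  have hbdd : Bornology.IsBounded (Set.range fun z => cexp (z - φ z)) := by
    refine (Metric.isBounded_iff_subset_closedBall 0).2 ⟨Real.exp M, ?_⟩
    rintro _ ⟨z, rfl⟩
    rw [Metric.mem_closedBall, dist_zero_right, Complex.norm_exp]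
    exact Real.exp_le_exp.2 (hM z)
  have hconst : (fun z => cexp (z - φ z)) = fun _ => cexp (0 - φ 0) :=
    funext fun z => hexp.apply_eq_apply_of_bounded hbdd z 0
  have hderiv : ∀ z, deriv (fun z => z - φ z) z = 0 := fun z => by
    have hsub : HasDerivAt (fun z => z - φ z) (1 - deriv φ z) z :=
      (hasDerivAt_id z).sub (hφ z).hasDerivAt
    have hd := hsub.cexp
    rw [hconst] at hd
    have := hd.unique (hasDerivAt_const z _)
    rw [mul_eq_zero, or_iff_right (Complex.exp_ne_zero _)] at this
    exact hsub.deriv.trans this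
  have := is_const_of_deriv_eq_zero (f := fun z => z - φ z) (differentiable_id.sub hφ) hderiv z 0
  linear_combination -this

theorem le_pow_mul_of_le_mul_add {f : ℝ → ℝ} {c δ : ℝ} (hc : 0 ≤ c)
    (hf : ∀ x, f (x + δ) ≤ c * f x) (x : ℝ) (m : ℕ) : f (x + m * δ) ≤ c ^ m * f x := by
  induction m with
  | zero => simp
  | succ m ih =>
    calc f (x + (m + 1 : ℕ) * δ) = f (x + m * δ + δ) := by push_cast; ring_nf
      _ ≤ c * f (x + m * δ) := hf _
      _ ≤ c * (c ^ m * f x) := by gcongr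
      _ = c ^ (m + 1) * f x := by ring

open scoped Topology

namespace DirichletHilbert

/-- The standing assumptions of the theorem; `Λ n` is the paper's `λ_{n+1}`. -/
structure Admissible (Λ β : ℕ → ℝ) : Prop where
  strictMono : StrictMono Λ
  pos_zero : 0 < Λ 0
  log_div_bounded : IsBoundedUnder (· ≤ ·) atTop fun n : ℕ => Real.log ((n : ℝ) + 1) / Λ n
  weight_pos : ∀ n, 0 < β n
  tendsto_log_weight_div : Tendsto (fun n => Real.log (β n) / Λ n) atTop atTop

noncomputable def kernel (Λ β : ℕ → ℝ) (x : ℝ) : ℝ :=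
  ∑' n, Real.exp (Λ n * (-2 * x)) / β n ^ 2

variable {Λ β : ℕ → ℝ}

theorem Admissible.pos (h : Admissible Λ β) (n : ℕ) : 0 < Λ n :=
  h.pos_zero.trans_le (h.strictMono.monotone n.zero_le)

theorem Admissible.summable_kernel (h : Admissible Λ β) (x : ℝ) :
    Summable fun n => Real.exp (Λ n * (-2 * x)) / β n ^ 2 := by
  refine summable_exp_mul_div h.pos h.log_div_bounded (fun n => pow_pos (h.weight_pos n) 2) ?_ _
  refine (h.tendsto_log_weight_div.const_mul_atTop two_pos).congr fun n => ?_
  rw [Real.log_pow]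
  push_cast
  ring

theorem Admissible.term_le_kernel (h : Admissible Λ β) (n : ℕ) (x : ℝ) :
    Real.exp (Λ n * (-2 * x)) / β n ^ 2 ≤ kernel Λ β x :=
  (h.summable_kernel x).le_tsum n fun _ _ => by positivity

theorem Admissible.kernel_pos (h : Admissible Λ β) (x : ℝ) : 0 < kernel Λ β x :=
  (div_pos (Real.exp_pos _) (pow_pos (h.weight_pos 0) 2)).trans_le (h.term_le_kernel 0 x)

theorem Admissible.summable_norm_and_sq_tsum_le (h : Admissible Λ β) {c : ℕ → ℂ}
    (hc : InHEb β c) (w : ℂ) :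
    Summable (fun n => ‖c n * cexp (-(Λ n : ℂ) * w)‖) ∧
      (∑' n, ‖c n * cexp (-(Λ n : ℂ) * w)‖) ^ 2
        ≤ (∑' n, ‖c n‖ ^ 2 * β n ^ 2) * kernel Λ β w.re := by
  have hβ := h.weight_pos
  have hsplit : ∀ n, ‖c n * cexp (-(Λ n : ℂ) * w)‖
      = (‖c n‖ * β n) * (Real.exp (-(Λ n * w.re)) / β n) := fun n => by
    rw [norm_mul_cexp]
    field_simp [(hβ n).ne']
  have hsq : ∀ n, (Real.exp (-(Λ n * w.re)) / β n) ^ 2 = Real.exp (Λ n * (-2 * w.re)) / β n ^ 2 :=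
    fun n => by rw [div_pow, ← Real.exp_nat_mul]; ring_nf
  simp only [hsplit]
  simpa only [mul_pow, hsq, kernel] using summable_mul_and_sq_tsum_mul_le
    (f := fun n => ‖c n‖ * β n) (g := fun n => Real.exp (-(Λ n * w.re)) / β n)
    (fun n => mul_nonneg (norm_nonneg (c n)) (hβ n).le)
    (fun n => div_nonneg (Real.exp_pos _).le (hβ n).le)
    (by simpa only [InHEb, mul_pow] using hc) (by simpa only [hsq] using h.summable_kernel w.re)

theorem Admissible.summable_mul_cexp (h : Admissible Λ β) {c : ℕ → ℂ} (hc : InHEb β c)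
    (w : ℂ) : Summable fun n => c n * cexp (-(Λ n : ℂ) * w) :=
  (h.summable_norm_and_sq_tsum_le hc w).1.of_norm

theorem Admissible.norm_tsum_sq_le (h : Admissible Λ β) {c : ℕ → ℂ} (hc : InHEb β c) (w : ℂ) :
    ‖∑' n, c n * cexp (-(Λ n : ℂ) * w)‖ ^ 2
      ≤ (∑' n, ‖c n‖ ^ 2 * β n ^ 2) * kernel Λ β w.re := by
  obtain ⟨hsum, hle⟩ := h.summable_norm_and_sq_tsum_le hc w
  exact (pow_le_pow_left₀ (norm_nonneg _) (norm_tsum_le_tsum_norm hsum) 2).trans hle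

open ComplexConjugate in
/-- Coefficients of the reproducing kernel `k_u` of `H(E,β)` at `u`: `k_u(u) = ‖k_u‖²` is
`kernel Λ β u.re`. -/
noncomputable def kernelCoeff (Λ β : ℕ → ℝ) (u : ℂ) (n : ℕ) : ℂ :=
  cexp (-(Λ n : ℂ) * conj u) / (β n : ℂ) ^ 2

theorem Admissible.norm_sq_kernelCoeff_mul (h : Admissible Λ β) (u : ℂ) (n : ℕ) :
    ‖kernelCoeff Λ β u n‖ ^ 2 * β n ^ 2 = Real.exp (Λ n * (-2 * u.re)) / β n ^ 2 := by
  have hβ := (h.weight_pos n).ne'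
  rw [kernelCoeff, norm_div, ← one_mul (cexp _), norm_mul_cexp, norm_one, one_mul, norm_pow,
    norm_real, Real.norm_eq_abs, sq_abs, conj_re, div_pow, ← Real.exp_nat_mul]
  field_simp
  ring_nf

theorem kernelCoeff_mul_cexp (u : ℂ) (n : ℕ) :
    kernelCoeff Λ β u n * cexp (-(Λ n : ℂ) * u)
      = ((Real.exp (Λ n * (-2 * u.re)) / β n ^ 2 : ℝ) : ℂ) := by
  rw [kernelCoeff, div_mul_eq_mul_div, ← Complex.exp_add, ← mul_add, add_comm, add_conj]
  push_cast
  ring_nf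

theorem Admissible.kernel_comp_le (h : Admissible Λ β) {φ : ℂ → ℂ} {C : ℝ}
    (hC : CompBddBy Λ β φ C) (w : ℂ) :
    kernel Λ β (φ w).re ≤ C ^ 2 * kernel Λ β w.re := by
  set K := kernel Λ β (φ w).re
  have hK : 0 < K := h.kernel_pos _
  have hnorm : (fun n => ‖kernelCoeff Λ β (φ w) n‖ ^ 2 * β n ^ 2)
      = fun n => Real.exp (Λ n * (-2 * (φ w).re)) / β n ^ 2 :=
    funext (h.norm_sq_kernelCoeff_mul (φ w))
  obtain ⟨b, hb, hsum, hbnorm⟩ := hC _ (by rw [InHEb, hnorm]; exact h.summable_kernel _)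
  have hval : ∑' n, kernelCoeff Λ β (φ w) n * cexp (-(Λ n : ℂ) * φ w) = K := by
    simp only [kernelCoeff_mul_cexp, K, kernel, ofReal_tsum]
  rw [hnorm, ← kernel] at hbnorm
  have hK2 : K ^ 2 ≤ (C ^ 2 * K) * kernel Λ β w.re :=
    calc K ^ 2 = ‖∑' n, b n * cexp (-(Λ n : ℂ) * w)‖ ^ 2 := by
          rw [(hsum w).tsum_eq, hval, norm_real, Real.norm_of_nonneg hK.le]
      _ ≤ (∑' n, ‖b n‖ ^ 2 * β n ^ 2) * kernel Λ β w.re := h.norm_tsum_sq_le hb w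
      _ ≤ (C ^ 2 * K) * kernel Λ β w.re :=
          mul_le_mul_of_nonneg_right hbnorm (h.kernel_pos _).le
  rw [sq, mul_assoc] at hK2
  exact le_of_mul_le_mul_left (hK2.trans_eq (by ring)) hK

theorem Admissible.exp_mul_kernel_le (h : Admissible Λ β) {u x : ℝ} (hux : u ≤ x) :
    Real.exp (2 * Λ 0 * (x - u)) * kernel Λ β x ≤ kernel Λ β u := by
  rw [kernel, kernel, ← tsum_mul_left]
  refine (h.summable_kernel x).mul_left _ |>.tsum_le_tsum (fun n => ?_) (h.summable_kernel u)
  rw [← mul_div_assoc, ← Real.exp_add]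
  have : Λ 0 ≤ Λ n := h.strictMono.monotone n.zero_le
  gcongr
  nlinarith

theorem Admissible.eq_add_of_compBddBy (h : Admissible Λ β) {φ : ℂ → ℂ} {C : ℝ}
    (hφ : Differentiable ℂ φ) (hC : CompBddBy Λ β φ C) (z : ℂ) : φ z = z + φ 0 := by
  have hΛ0 := h.pos_zero
  -- `1 + t ≤ eᵗ` turns `e^{2λ_1 (Re z - Re φ(z))} ≤ C²` into a linear bound
  refine eq_add_apply_zero_of_re_sub_le hφ (M := C ^ 2 / (2 * Λ 0)) (fun z => ?_) z
  rw [sub_re, le_div_iff₀ (by positivity)]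
  rcases le_or_gt (z.re - (φ z).re) 0 with hle | hlt
  · nlinarith [sq_nonneg C]
  · have hexp : Real.exp (2 * Λ 0 * (z.re - (φ z).re)) ≤ C ^ 2 :=
      le_of_mul_le_mul_right
        ((h.exp_mul_kernel_le (sub_pos.1 hlt).le).trans (h.kernel_comp_le hC z)) (h.kernel_pos _)
    nlinarith [Real.add_one_le_exp (2 * Λ 0 * (z.re - (φ z).re))]

theorem Admissible.kernel_add_le (h : Admissible Λ β) {b : ℂ} {C : ℝ}
    (hC : CompBddBy Λ β (· + b) C) (x : ℝ) :
    kernel Λ β (x + b.re) ≤ C ^ 2 * kernel Λ β x := by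
  simpa using h.kernel_comp_le hC x

theorem Admissible.re_nonneg_of_compBddBy_add (h : Admissible Λ β)
    (htop : Tendsto Λ atTop atTop) {b : ℂ} {C : ℝ} (hC : CompBddBy Λ β (· + b) C) :
    0 ≤ b.re := by
  by_contra! hb
  obtain ⟨N, hN⟩ : ∃ N, C ^ 2 < Real.exp (Λ N * (-2 * b.re)) :=
    ((Real.tendsto_exp_atTop.comp (htop.atTop_mul_const (by linarith))).eventually_gt_atTop
      _).exists
  set r := Real.exp (Λ N * (-2 * b.re))
  have hr : 0 < r := Real.exp_pos _
  have hK0 := h.kernel_pos 0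
  have hbounded : ∀ m : ℕ, r ^ m ≤ (C ^ 2) ^ m * (β N ^ 2 * kernel Λ β 0) := fun m => by
    have hterm := h.term_le_kernel N (m * b.re)
    rw [div_le_iff₀ (pow_pos (h.weight_pos N) 2)] at hterm
    calc r ^ m = Real.exp (Λ N * (-2 * (m * b.re))) := by
          rw [← Real.exp_nat_mul]; ring_nf
      _ ≤ kernel Λ β (m * b.re) * β N ^ 2 := hterm
      _ ≤ (C ^ 2) ^ m * kernel Λ β 0 * β N ^ 2 := by
          gcongr
          simpa using le_pow_mul_of_le_mul_add (sq_nonneg C) (h.kernel_add_le hC) 0 m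
      _ = (C ^ 2) ^ m * (β N ^ 2 * kernel Λ β 0) := by ring
  obtain ⟨m, hm⟩ := exists_pow_lt_of_lt_one
    (inv_pos.2 (mul_pos (pow_pos (h.weight_pos N) 2) hK0)) ((div_lt_one hr).2 hN)
  rw [div_pow, div_lt_iff₀ (pow_pos hr m), inv_mul_eq_div,
    lt_div_iff₀ (mul_pos (pow_pos (h.weight_pos N) 2) hK0)] at hm
  linarith [hbounded m]

theorem Admissible.tendsto_kernel_mul_exp (h : Admissible Λ β) :
    Tendsto (fun x => kernel Λ β x * Real.exp (2 * Λ 0 * x)) atTop (𝓝 (1 / β 0 ^ 2)) := by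
  have hterm : ∀ x n, Real.exp (Λ n * (-2 * x)) / β n ^ 2 * Real.exp (2 * Λ 0 * x)
      = Real.exp (-(2 * (Λ n - Λ 0)) * x) / β n ^ 2 := fun x n => by
    rw [div_mul_eq_mul_div, ← Real.exp_add]; ring_nf
  simp only [kernel, ← tsum_mul_right, hterm]
  rw [← tsum_ite_eq 0 fun _ => 1 / β 0 ^ 2]
  refine tendsto_tsum_of_dominated_convergence (bound := fun n => 1 / β n ^ 2)
    (by simpa using h.summable_kernel 0) (fun n => ?_) ?_
  · rcases n.eq_zero_or_pos with rfl | hn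
    · simp
    · have hgap : 0 < 2 * (Λ n - Λ 0) := by linarith [h.strictMono hn]
      simpa [hn.ne'] using ((Real.tendsto_exp_atBot.comp
        (tendsto_id.const_mul_atTop_of_neg (neg_lt_zero.2 hgap))).div_const (β n ^ 2))
  · filter_upwards [eventually_ge_atTop 0] with x hx n
    have : Λ 0 ≤ Λ n := h.strictMono.monotone n.zero_le
    rw [Real.norm_of_nonneg (by positivity)]
    gcongr
    exact Real.exp_le_one_iff.2 (by nlinarith)

theorem Admissible.compBddBy_add (h : Admissible Λ β) {b : ℂ} (hb : 0 ≤ b.re) :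
    CompBddBy Λ β (· + b) (Real.exp (-(Λ 0) * b.re)) := by
  intro a ha
  have hterm : ∀ n, ‖a n * cexp (-(Λ n : ℂ) * b)‖ ^ 2 * β n ^ 2
      ≤ Real.exp (-(Λ 0) * b.re) ^ 2 * (‖a n‖ ^ 2 * β n ^ 2) := fun n => by
    have : Λ 0 ≤ Λ n := h.strictMono.monotone n.zero_le
    rw [norm_mul_cexp, mul_pow, mul_left_comm, mul_assoc]
    gcongr
    nlinarith
  have hmem : InHEb β fun n => a n * cexp (-(Λ n : ℂ) * b) :=
    Summable.of_nonneg_of_le (fun n => by positivity) hterm (ha.mul_left _)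
  refine ⟨_, hmem, fun z => ?_, ?_⟩
  · convert (h.summable_mul_cexp ha (z + b)).hasSum using 1
    funext n
    rw [mul_assoc, ← Complex.exp_add]
    ring_nf
  · rw [← tsum_mul_left]
    exact hmem.tsum_le_tsum hterm (ha.mul_left _)

theorem Admissible.exp_le_of_compBddBy_add (h : Admissible Λ β) {b : ℂ} {C : ℝ} (hC0 : 0 ≤ C)
    (hC : CompBddBy Λ β (· + b) C) : Real.exp (-(Λ 0) * b.re) ≤ C := by
  set E := Real.exp (-(Λ 0) * b.re)
  have hlim := h.tendsto_kernel_mul_exp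
  have hshifted : Tendsto (fun x => kernel Λ β (x + b.re) * Real.exp (2 * Λ 0 * x)) atTop
      (𝓝 (1 / β 0 ^ 2 * E ^ 2)) := by
    refine ((hlim.comp (tendsto_atTop_add_const_right _ b.re tendsto_id)).mul_const (E ^ 2)).congr
      fun x => ?_
    simp only [Function.comp, id, E, ← Real.exp_nat_mul, mul_assoc, ← Real.exp_add]
    ring_nf
  have hle : 1 / β 0 ^ 2 * E ^ 2 ≤ C ^ 2 * (1 / β 0 ^ 2) :=
    le_of_tendsto_of_tendsto' hshifted (hlim.const_mul (C ^ 2)) fun x => by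
      rw [← mul_assoc]
      exact mul_le_mul_of_nonneg_right (h.kernel_add_le hC x) (Real.exp_pos _).le
  rw [mul_comm (C ^ 2)] at hle
  exact (pow_le_pow_iff_left₀ (Real.exp_pos _).le hC0 two_ne_zero).1
    (le_of_mul_le_mul_left hle (by simpa using pow_pos (h.weight_pos 0) 2))

end DirichletHilbert

open DirichletHilbert in
theorem stmt_14_general (Λ : ℕ → ℝ) (β : ℕ → ℝ) (φ : ℂ → ℂ)
    (hmono : StrictMono Λ)
    (htop : Tendsto Λ atTop atTop)
    (hL : IsBoundedUnder (· ≤ ·) atTop (fun n : ℕ => Real.log ((n : ℝ) + 1) / Λ n))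
    (hβ : ∀ n, 0 < β n)
    (hE : Tendsto (fun n => Real.log (β n) / Λ n) atTop atTop)
    (hΛ0 : 0 < Λ 0)
    (hφ : Differentiable ℂ φ) :
    ((∃ C : ℝ, 0 ≤ C ∧ CompBddBy Λ β φ C) ↔
      ∃ b : ℂ, 0 ≤ b.re ∧ ∀ z : ℂ, φ z = z + b) ∧
    (∀ b : ℂ, 0 ≤ b.re → (∀ z : ℂ, φ z = z + b) →
      sInf {C : ℝ | 0 ≤ C ∧ CompBddBy Λ β φ C} = Real.exp (-(Λ 0) * b.re)) := by
  have h : Admissible Λ β := ⟨hmono, hΛ0, hL, hβ, hE⟩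
  refine ⟨⟨fun ⟨C, _, hC⟩ => ?_, fun ⟨b, hb, hφb⟩ => ?_⟩, fun b hb hφb => ?_⟩
  · have hφb : φ = (· + φ 0) := funext (h.eq_add_of_compBddBy hφ hC)
    rw [hφb] at hC
    exact ⟨φ 0, h.re_nonneg_of_compBddBy_add htop hC, congrFun hφb⟩
  · obtain rfl : φ = (· + b) := funext hφb
    exact ⟨_, (Real.exp_pos _).le, h.compBddBy_add hb⟩
  · obtain rfl : φ = (· + b) := funext hφb
    exact IsLeast.csInf_eq ⟨⟨(Real.exp_pos _).le, h.compBddBy_add hb⟩,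
      fun C hC => h.exp_le_of_compBddBy_add hC.1 hC.2⟩

/-- Criterion for `λ_1 > 0`: `C_φ` is bounded on `H(E,β)` iff
`φ(z) = z + b` with `Re b ≥ 0`; in that case the operator norm (least bound constant)
equals `e^{-λ_1 Re b}`. -/
theorem stmt_14 (Λ : ℕ → ℝ) (β : ℕ → ℝ) (φ : ℂ → ℂ)
    (hmono : StrictMono Λ) (hpos : ∀ n, 0 ≤ Λ n)
    (htop : Tendsto Λ atTop atTop)
    (hL : IsBoundedUnder (· ≤ ·) atTop (fun n : ℕ => Real.log ((n : ℝ) + 1) / Λ n))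
    (hβ : ∀ n, 0 < β n)
    (hE : Tendsto (fun n => Real.log (β n) / Λ n) atTop atTop)
    (hΛ0 : 0 < Λ 0)
    (hφ : Differentiable ℂ φ) :
    ((∃ C : ℝ, 0 ≤ C ∧ CompBddBy Λ β φ C) ↔
      ∃ b : ℂ, 0 ≤ b.re ∧ ∀ z : ℂ, φ z = z + b) ∧
    (∀ b : ℂ, 0 ≤ b.re → (∀ z : ℂ, φ z = z + b) →
      sInf {C : ℝ | 0 ≤ C ∧ CompBddBy Λ β φ C} = Real.exp (-(Λ 0) * b.re)) :=
  stmt_14_general Λ β φ hmono htop hL hβ hE hΛ0 hφ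
end

section
/- Assume condition (E) with λ_1 = 0 and suppose C_φ is bounded on H(E,β) for an entire φ not of the form z + b. If g(z) = M^{-1} e^{-λ_2 φ(z)} admits a Dirichlet series expansion g(z) = c_1 + c_2 e^{-λ_2 z} + c_3 e^{-λ_3 z} + ... and satisfies |g(z)| < e^{-λ_2 Re(z)} for all z with Re(z) < 0, then c_n = 0 for all n > 2; hence e^{-λ_2 φ(z)} = a_1 + a_2 e^{-λ_2 z} for some constants a_1, a_2 ∈ ℂ. -/
/-!
Condition (E), together with `log n = O(λ_n)`, makes the Dirichlet series `Σ cₙ e^{-λₙ z}` of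
`g` converge absolutely on every vertical line `Re z = σ`. Bohr's mean-value formula recovers
`cₙ e^{-λₙ σ}` as the limit of `(2T)⁻¹ ∫_{-T}^{T} g(σ + it) e^{iλₙ t} dt`, so the bound on `g`
gives `‖cₙ‖ ≤ e^{(λₙ - λ₂) σ}` for all `σ < 0`, and letting `σ → -∞` kills `cₙ` when `λₙ > λ₂`.
(In Lean the exponents are indexed from `0`: `Λ 0 = λ₁`, `Λ 1 = λ₂`.)
-/

open Filter Complex Topology MeasureTheory

noncomputable def symmetricMean (f : ℝ → ℂ) (T : ℝ) : ℂ :=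
  (2 * T : ℂ)⁻¹ * ∫ t in (-T)..T, f t

lemma symmetricMean_const_mul (a : ℂ) (f : ℝ → ℂ) (T : ℝ) :
    symmetricMean (fun t => a * f t) T = a * symmetricMean f T := by
  simp only [symmetricMean, intervalIntegral.integral_const_mul]
  ring

lemma symmetricMean_const (a : ℂ) {T : ℝ} (hT : T ≠ 0) : symmetricMean (fun _ => a) T = a := by
  have hT' : (T : ℂ) ≠ 0 := ofReal_ne_zero.2 hT
  simp only [symmetricMean, intervalIntegral.integral_const, real_smul]
  push_cast
  field_simp
  ring

lemma norm_symmetricMean_le {f : ℝ → ℂ} {B T : ℝ} (hT : 0 < T) (hf : ∀ t, ‖f t‖ ≤ B) :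
    ‖symmetricMean f T‖ ≤ B := by
  have hint := intervalIntegral.norm_integral_le_of_norm_le_const (a := -T) (b := T)
    fun t _ => hf t
  rw [show T - -T = 2 * T by ring, abs_of_pos (by linarith)] at hint
  rw [symmetricMean, norm_mul, norm_inv, show (2 * T : ℂ) = ((2 * T : ℝ) : ℂ) by push_cast; ring,
    Complex.norm_real, Real.norm_of_nonneg (by linarith), inv_mul_le_iff₀ (by linarith)]
  linarith

lemma norm_integral_exp_mul_I_le {ω : ℝ} (hω : ω ≠ 0) (a b : ℝ) :
    ‖∫ t in a..b, exp (((ω * t : ℝ) : ℂ) * I)‖ ≤ 2 / |ω| := by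
  have hωI : (ω : ℂ) * I ≠ 0 := mul_ne_zero (ofReal_ne_zero.2 hω) I_ne_zero
  have hunit : ∀ s : ℝ, ‖exp (ω * I * s)‖ = 1 := fun s => by
    rw [show (ω : ℂ) * I * s = ((ω * s : ℝ) : ℂ) * I by push_cast; ring, norm_exp_ofReal_mul_I]
  simp_rw [show ∀ t : ℝ, ((ω * t : ℝ) : ℂ) * I = ω * I * t from fun t => by push_cast; ring]
  rw [integral_exp_mul_complex hωI, norm_div, norm_mul, norm_I, mul_one, norm_real,
    Real.norm_eq_abs]
  gcongr
  calc _ ≤ ‖exp (ω * I * b)‖ + ‖exp (ω * I * a)‖ := norm_sub_le _ _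
    _ = 2 := by rw [hunit, hunit]; norm_num

lemma tendsto_symmetricMean_exp_mul_I {ω : ℝ} (hω : ω ≠ 0) :
    Tendsto (symmetricMean fun t => exp (((ω * t : ℝ) : ℂ) * I)) atTop (𝓝 0) := by
  have hlim : Tendsto (fun T : ℝ => |ω|⁻¹ * T⁻¹) atTop (𝓝 0) := by
    simpa using tendsto_inv_atTop_zero.const_mul |ω|⁻¹
  refine squeeze_zero_norm' ?_ hlim
  filter_upwards [eventually_gt_atTop 0] with T hT
  rw [symmetricMean, norm_mul, norm_inv, show (2 * T : ℂ) = ((2 * T : ℝ) : ℂ) by push_cast; ring,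
    Complex.norm_real, Real.norm_of_nonneg (by linarith)]
  calc (2 * T)⁻¹ * ‖∫ t in (-T)..T, exp (((ω * t : ℝ) : ℂ) * I)‖ ≤ (2 * T)⁻¹ * (2 / |ω|) := by
        gcongr; exact norm_integral_exp_mul_I_le hω _ _
    _ = |ω|⁻¹ * T⁻¹ := by field_simp

lemma hasSum_symmetricMean {ι : Type*} [Countable ι] {F : ι → ℝ → ℂ} {f : ℝ → ℂ} {bound : ι → ℝ}
    (hF : ∀ k, Continuous (F k)) (hbound : ∀ k t, ‖F k t‖ ≤ bound k) (hsum : Summable bound)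
    (hf : ∀ t, HasSum (F · t) (f t)) (T : ℝ) :
    HasSum (fun k => symmetricMean (F k) T) (symmetricMean f T) :=
  (intervalIntegral.hasSum_integral_of_dominated_convergence (fun k _ => bound k)
    (fun k => (hF k).aestronglyMeasurable) (fun k => ae_of_all _ fun t _ => hbound k t)
    (ae_of_all _ fun _ _ => hsum) intervalIntegrable_const (ae_of_all _ fun t _ => hf t)).mul_left _

theorem tendsto_symmetricMean_tsum_mul_exp {Λ : ℕ → ℝ} (hΛ : Function.Injective Λ) {a : ℕ → ℂ}
    (ha : Summable (‖a ·‖)) (n : ℕ) :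
    Tendsto (symmetricMean fun t =>
        (∑' k, a k * exp (-((Λ k * t : ℝ) : ℂ) * I)) * exp (((Λ n * t : ℝ) : ℂ) * I))
      atTop (𝓝 (a n)) := by
  set F : ℕ → ℝ → ℂ := fun k t => a k * exp ((((Λ n - Λ k) * t : ℝ) : ℂ) * I)
  have hF : ∀ k t, ‖F k t‖ = ‖a k‖ := fun k t => by
    rw [norm_mul, norm_exp_ofReal_mul_I, mul_one]
  have hsum : ∀ t, HasSum (F · t)
      ((∑' k, a k * exp (-((Λ k * t : ℝ) : ℂ) * I)) * exp (((Λ n * t : ℝ) : ℂ) * I)) := by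
    intro t
    have hs : Summable fun k => a k * exp (-((Λ k * t : ℝ) : ℂ) * I) :=
      ha.of_norm_bounded fun k => by rw [norm_mul, ← ofReal_neg, norm_exp_ofReal_mul_I, mul_one]
    have hFt : (F · t) = fun k =>
        a k * exp (-((Λ k * t : ℝ) : ℂ) * I) * exp (((Λ n * t : ℝ) : ℂ) * I) := by
      funext k
      simp only [F, mul_assoc, ← exp_add]
      congr 2
      push_cast
      ring
    rw [hFt]
    exact hs.hasSum.mul_right _
  have hmean : ∀ T, symmetricMean (fun t =>
        (∑' k, a k * exp (-((Λ k * t : ℝ) : ℂ) * I)) * exp (((Λ n * t : ℝ) : ℂ) * I)) T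
      = ∑' k, a k * symmetricMean (fun t => exp ((((Λ n - Λ k) * t : ℝ) : ℂ) * I)) T := fun T => by
    simp_rw [← symmetricMean_const_mul]
    exact (hasSum_symmetricMean (fun k => by fun_prop) (fun k t => (hF k t).le) ha hsum
      T).tsum_eq.symm
  rw [funext hmean, ← tsum_ite_eq n a]
  -- Dominated convergence in `T`: off the diagonal the mean of a nontrivial character tends to `0`.
  refine tendsto_tsum_of_dominated_convergence ha (fun k => ?_) ?_
  · by_cases hk : k = n
    · subst hk
      simp only [sub_self, zero_mul, ofReal_zero, exp_zero, if_true]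
      refine tendsto_const_nhds.congr' ?_
      filter_upwards [eventually_ne_atTop 0] with T hT
      rw [symmetricMean_const 1 hT, mul_one]
    · simpa [hk] using (tendsto_symmetricMean_exp_mul_I
        (sub_ne_zero.2 (hΛ.ne (Ne.symm hk)))).const_mul (a k)
  · filter_upwards [eventually_gt_atTop 0] with T hT k
    rw [← symmetricMean_const_mul]
    exact norm_symmetricMean_le hT fun t => (hF k t).le

theorem norm_le_of_forall_norm_tsum_le {Λ : ℕ → ℝ} (hΛ : Function.Injective Λ) {a : ℕ → ℂ}
    (ha : Summable (‖a ·‖)) {B : ℝ}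
    (hB : ∀ t : ℝ, ‖∑' k, a k * exp (-((Λ k * t : ℝ) : ℂ) * I)‖ ≤ B) (n : ℕ) : ‖a n‖ ≤ B := by
  refine le_of_tendsto (tendsto_symmetricMean_tsum_mul_exp hΛ ha n).norm ?_
  filter_upwards [eventually_gt_atTop 0] with T hT
  exact norm_symmetricMean_le hT fun t => by
    rw [norm_mul, norm_exp_ofReal_mul_I, mul_one]
    exact hB t

theorem norm_mul_exp_le_of_hasSum_dirichlet {Λ : ℕ → ℝ} (hΛ : Function.Injective Λ) {c : ℕ → ℂ}
    {g : ℂ → ℂ} {σ B : ℝ} (hc : Summable fun k => ‖c k‖ * Real.exp (-Λ k * σ))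
    (hg : ∀ z : ℂ, z.re = σ → HasSum (fun k => c k * exp (-(Λ k : ℂ) * z)) (g z))
    (hB : ∀ z : ℂ, z.re = σ → ‖g z‖ ≤ B) (n : ℕ) :
    ‖c n‖ * Real.exp (-Λ n * σ) ≤ B := by
  have hnorm : ∀ k, ‖c k * exp (-(Λ k : ℂ) * σ)‖ = ‖c k‖ * Real.exp (-Λ k * σ) := fun k => by
    rw [norm_mul, ← ofReal_neg, ← ofReal_mul, norm_exp_ofReal]
  rw [← hnorm]
  refine norm_le_of_forall_norm_tsum_le hΛ (a := fun k => c k * exp (-(Λ k : ℂ) * σ))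
    (by simpa only [hnorm] using hc) (fun t => ?_) n
  have hline : (σ + t * I : ℂ).re = σ := by simp
  have hterm : ∀ k, c k * exp (-(Λ k : ℂ) * σ) * exp (-((Λ k * t : ℝ) : ℂ) * I)
      = c k * exp (-(Λ k : ℂ) * (σ + t * I)) := fun k => by
    rw [mul_assoc, ← exp_add]
    congr 2
    push_cast
    ring
  simp_rw [hterm]
  rw [(hg _ hline).tsum_eq]
  exact hB _ hline

lemma eq_zero_of_forall_neg_norm_le_exp {E : Type*} [NormedAddCommGroup E] {x : E} {r : ℝ}
    (hr : 0 < r) (h : ∀ σ < 0, ‖x‖ ≤ Real.exp (r * σ)) : x = 0 := by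
  have hlim : Tendsto (fun σ => Real.exp (r * σ)) atBot (𝓝 0) :=
    Real.tendsto_exp_atBot.comp (tendsto_id.const_mul_atBot hr)
  exact norm_le_zero_iff.1 (ge_of_tendsto hlim ((eventually_lt_atBot 0).mono h))

lemma summable_norm_mul_of_summable_sq_mul {ι : Type*} {c : ι → ℂ} {β w : ι → ℝ}
    (hβ : ∀ k, 0 < β k) (hw : ∀ k, 0 ≤ w k) (hc : Summable fun k => ‖c k‖ ^ 2 * β k ^ 2)
    (hwβ : Summable fun k => (β k)⁻¹ * w k) : Summable fun k => ‖c k‖ * w k := by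
  have hcβ : ∀ k, ‖c k‖ * β k ≤ √(∑' j, ‖c j‖ ^ 2 * β j ^ 2) := fun k =>
    (Real.le_sqrt (by have := hβ k; positivity) (tsum_nonneg fun _ => by positivity)).2
      (by rw [mul_pow]; exact hc.le_tsum k fun _ _ => by positivity)
  refine (hwβ.mul_left √(∑' j, ‖c j‖ ^ 2 * β j ^ 2)).of_nonneg_of_le
    (fun k => mul_nonneg (norm_nonneg _) (hw k)) fun k => ?_
  calc ‖c k‖ * w k = ‖c k‖ * β k * ((β k)⁻¹ * w k) := by field_simp [(hβ k).ne']
    _ ≤ _ := mul_le_mul_of_nonneg_right (hcβ k) (mul_nonneg (inv_nonneg.2 (hβ k).le) (hw k))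

theorem summable_inv_mul_exp_of_tendsto_log_div {Λ β : ℕ → ℝ} (hβ : ∀ n, 0 < β n)
    (hΛ : ∀ᶠ n in atTop, 0 < Λ n)
    (hL : IsBoundedUnder (· ≤ ·) atTop (fun n : ℕ => Real.log ((n : ℝ) + 1) / Λ n))
    (hE : Tendsto (fun n => Real.log (β n) / Λ n) atTop atTop) (σ : ℝ) :
    Summable fun n => (β n)⁻¹ * Real.exp (-Λ n * σ) := by
  obtain ⟨L, hL⟩ := hL
  rw [eventually_map] at hL
  have hp : Summable fun n : ℕ => (((n : ℝ) + 1) ^ 2)⁻¹ := by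
    exact_mod_cast (summable_nat_add_iff 1).2 (Real.summable_nat_pow_inv.2 one_lt_two)
  refine hp.of_norm_bounded_eventually_nat ?_
  filter_upwards [hΛ, hL, hE.eventually_ge_atTop (2 * L - σ)] with n hΛn hLn hEn
  rw [div_le_iff₀ hΛn] at hLn
  rw [le_div_iff₀ hΛn] at hEn
  have hβn := hβ n
  calc ‖(β n)⁻¹ * Real.exp (-Λ n * σ)‖ = Real.exp (-Λ n * σ - Real.log (β n)) := by
        rw [Real.exp_sub, Real.exp_log hβn, Real.norm_of_nonneg (by positivity)]; ring
    _ ≤ Real.exp (-Real.log (((n : ℝ) + 1) ^ 2)) :=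
        Real.exp_le_exp.2 (by rw [Real.log_pow]; push_cast; linarith)
    _ = (((n : ℝ) + 1) ^ 2)⁻¹ := by rw [Real.exp_neg, Real.exp_log (by positivity)]

theorem stmt_15_general (Λ : ℕ → ℝ) (β : ℕ → ℝ) (φ : ℂ → ℂ) (M : ℝ) (c : ℕ → ℂ)
    (hmono : StrictMono Λ)
    (hL : IsBoundedUnder (· ≤ ·) atTop (fun n : ℕ => Real.log ((n : ℝ) + 1) / Λ n))
    (hβ : ∀ n, 0 < β n)
    (hE : Tendsto (fun n => Real.log (β n) / Λ n) atTop atTop)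
    (hΛ0 : Λ 0 = 0)
    (hM : 0 < M)
    (hrep : ∀ z : ℂ, HasSum (fun n => c n * Complex.exp (-(Λ n : ℂ) * z))
      ((M : ℂ)⁻¹ * Complex.exp (-(Λ 1 : ℂ) * φ z)))
    (hmem : Summable (fun n => ‖c n‖ ^ 2 * (β n) ^ 2))
    (hsmall : ∀ z : ℂ, z.re < 0 →
      ‖(M : ℂ)⁻¹ * Complex.exp (-(Λ 1 : ℂ) * φ z)‖ < Real.exp (-(Λ 1) * z.re)) :
    (∀ n : ℕ, 2 ≤ n → c n = 0) ∧
    ∀ z : ℂ, Complex.exp (-(Λ 1 : ℂ) * φ z)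
      = (M : ℂ) * c 0 + (M : ℂ) * c 1 * Complex.exp (-(Λ 1 : ℂ) * z) := by
  have hΛpos : ∀ᶠ n in atTop, 0 < Λ n := eventually_atTop.2 ⟨1, fun n hn => hΛ0 ▸ hmono hn⟩
  have hsum (σ : ℝ) : Summable fun k => ‖c k‖ * Real.exp (-Λ k * σ) :=
    summable_norm_mul_of_summable_sq_mul hβ (fun _ => (Real.exp_pos _).le) hmem
      (summable_inv_mul_exp_of_tendsto_log_div hβ hΛpos hL hE σ)
  have hzero (n : ℕ) (hn : 2 ≤ n) : c n = 0 := by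
    refine eq_zero_of_forall_neg_norm_le_exp (sub_pos.2 (hmono (by omega : 1 < n))) fun σ hσ => ?_
    have hbound := norm_mul_exp_le_of_hasSum_dirichlet hmono.injective (hsum σ)
      (B := Real.exp (-Λ 1 * σ)) (fun z _ => hrep z) (fun z hz => hz ▸ (hsmall z (hz ▸ hσ)).le) n
    calc ‖c n‖ = ‖c n‖ * Real.exp (-Λ n * σ) * Real.exp (Λ n * σ) := by
          rw [mul_assoc, ← Real.exp_add]; simp
      _ ≤ Real.exp (-Λ 1 * σ) * Real.exp (Λ n * σ) := by gcongr
      _ = Real.exp ((Λ n - Λ 1) * σ) := by rw [← Real.exp_add]; ring_nf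
  refine ⟨hzero, fun z => ?_⟩
  have htwo := (hrep z).unique (hasSum_sum_of_ne_finset_zero (s := Finset.range 2)
    fun k hk => by rw [hzero k (not_lt.1 (Finset.mem_range.not.1 hk)), zero_mul])
  simp only [Finset.sum_range_succ, Finset.sum_range_zero, zero_add, hΛ0, ofReal_zero, neg_zero,
    zero_mul, exp_zero, mul_one] at htwo
  rw [inv_mul_eq_iff_eq_mul₀ (ofReal_ne_zero.2 hM.ne')] at htwo
  rw [htwo, mul_add, mul_assoc]

/-- `λ_1 = 0` case, key coefficient-killing step. Suppose `C_φ` is bounded on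
`H(E,β)` for an entire `φ` not of the form `z + b`, `M > 0`, and
`g(z) = M⁻¹ e^{-λ_2 φ(z)}` admits a Dirichlet expansion `g = Σ c_n e^{-λ_n z}` in `H(E,β)`
with `‖g z‖ < e^{-λ_2 Re z}` whenever `Re z < 0`. Then `c_n = 0` for all `n > 2`, and hence
`e^{-λ_2 φ(z)} = a₁ + a₂ e^{-λ_2 z}` with `a₁ = M c₁`, `a₂ = M c₂`. -/
theorem stmt_15 (Λ : ℕ → ℝ) (β : ℕ → ℝ) (φ : ℂ → ℂ) (M : ℝ) (c : ℕ → ℂ)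
    (hmono : StrictMono Λ) (hpos : ∀ n, 0 ≤ Λ n)
    (htop : Tendsto Λ atTop atTop)
    (hL : IsBoundedUnder (· ≤ ·) atTop (fun n : ℕ => Real.log ((n : ℝ) + 1) / Λ n))
    (hβ : ∀ n, 0 < β n)
    (hE : Tendsto (fun n => Real.log (β n) / Λ n) atTop atTop)
    (hΛ0 : Λ 0 = 0)
    (hφ : Differentiable ℂ φ)
    (hnotshift : ¬ ∃ b : ℂ, ∀ z : ℂ, φ z = z + b)
    (hbdd : ∃ C : ℝ, ∀ a : ℕ → ℂ, Summable (fun n => ‖a n‖ ^ 2 * (β n) ^ 2) →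
      ∃ b : ℕ → ℂ, Summable (fun n => ‖b n‖ ^ 2 * (β n) ^ 2) ∧
        (∀ z : ℂ, HasSum (fun n => b n * Complex.exp (-(Λ n : ℂ) * z))
          (∑' n, a n * Complex.exp (-(Λ n : ℂ) * φ z))) ∧
        ∑' n, ‖b n‖ ^ 2 * (β n) ^ 2 ≤ C * ∑' n, ‖a n‖ ^ 2 * (β n) ^ 2)
    (hM : 0 < M)
    (hrep : ∀ z : ℂ, HasSum (fun n => c n * Complex.exp (-(Λ n : ℂ) * z))
      ((M : ℂ)⁻¹ * Complex.exp (-(Λ 1 : ℂ) * φ z)))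
    (hmem : Summable (fun n => ‖c n‖ ^ 2 * (β n) ^ 2))
    (hsmall : ∀ z : ℂ, z.re < 0 →
      ‖(M : ℂ)⁻¹ * Complex.exp (-(Λ 1 : ℂ) * φ z)‖ < Real.exp (-(Λ 1) * z.re)) :
    (∀ n : ℕ, 2 ≤ n → c n = 0) ∧
    ∀ z : ℂ, Complex.exp (-(Λ 1 : ℂ) * φ z)
      = (M : ℂ) * c 0 + (M : ℂ) * c 1 * Complex.exp (-(Λ 1 : ℂ) * z) :=
  stmt_15_general Λ β φ M c hmono hL hβ hE hΛ0 hM hrep hmem hsmall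
end

section
/- Assume condition (E) with λ_1 = 0 and suppose there is B > 1 with Σ_{n≥1} β_n^{-2} e^{-2λ_n Re(φ(w))} ≤ B Σ_{n≥1} β_n^{-2} e^{-2λ_n Re(w)} for all w ∈ ℂ, where φ is entire and ψ(z) = z - φ(z) is nonconstant. Then the function Q(z) = e^{λ_2 ψ(z)} is bounded on the half-plane Re(z) < 0. -/
open Filter Complex

/-!
Write `K(x) = Σ β_n⁻² e^{-2 λ_n x}`, so that `‖k_w‖² = K(Re w)`; condition (E) makes the series
converge for every `x`, and `K` is decreasing. Since `λ_1 = 0`, `K(x) = β_1⁻² + T(x)` where the tail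
`T` satisfies `T(x - c) ≥ e^{2 λ_2 c} T(x)` for `c ≥ 0` and `T(x) ≥ β_2⁻²` for `x ≤ 0`. Hence for a
large enough constant `c`, `K(Re z - c) > B K(Re z)` whenever `Re z ≤ 0`, and the hypothesis
`K(Re φ(z)) ≤ B K(Re z)` forces `Re φ(z) > Re z - c`, i.e. `|Q(z)| = e^{λ_2 Re ψ(z)} ≤ e^{λ_2 c}`.
-/

theorem summable_exp_mul_div_sq {Λ β : ℕ → ℝ} (hβ : ∀ n, β n ≠ 0)
    (hΛ : ∀ᶠ n in atTop, 0 < Λ n)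
    (hL : IsBoundedUnder (· ≤ ·) atTop (fun n : ℕ => Real.log ((n : ℝ) + 1) / Λ n))
    (hE : Tendsto (fun n => Real.log (β n) / Λ n) atTop atTop) (x : ℝ) :
    Summable fun n => Real.exp (-2 * Λ n * x) / β n ^ 2 := by
  obtain ⟨K, hK⟩ := hL
  refine .of_norm_bounded_eventually_nat ((Real.summable_one_div_nat_add_rpow 1 2).2 one_lt_two) ?_
  filter_upwards [hΛ, eventually_map.1 hK, hE.eventually_ge_atTop (K - x)] with n hΛn hKn hEn
  have hn : (0 : ℝ) < n + 1 := by positivity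
  rw [div_le_iff₀ hΛn] at hKn
  rw [le_div_iff₀ hΛn] at hEn
  have hβsq : β n ^ 2 = Real.exp (2 * Real.log (β n)) := by
    rw [← sq_abs, ← Real.exp_log_eq_abs (hβ n), ← Real.exp_nat_mul]; norm_num
  calc ‖Real.exp (-2 * Λ n * x) / β n ^ 2‖ = Real.exp (-2 * (Λ n * x + Real.log (β n))) := by
        rw [Real.norm_of_nonneg (by positivity), hβsq, ← Real.exp_sub]; ring_nf
    _ ≤ Real.exp (-(Real.log (n + 1) * 2)) := Real.exp_le_exp.2 (by nlinarith)
    _ = 1 / |(n : ℝ) + 1| ^ (2 : ℝ) := by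
        rw [abs_of_pos hn, Real.rpow_def_of_pos hn, Real.exp_neg, one_div]

/-- `kernelSq Λ β (Re w) = ‖k_w‖²`, with the paper's `λ_{n+1}, β_{n+1}` stored as `Λ n, β n`. -/
noncomputable def kernelSq (Λ β : ℕ → ℝ) (x : ℝ) : ℝ :=
  ∑' n, Real.exp (-2 * Λ n * x) / β n ^ 2

section KernelSq

variable {Λ β : ℕ → ℝ}

theorem kernelSq_antitone (hΛ : ∀ n, 0 ≤ Λ n)
    (hsum : ∀ x, Summable fun n => Real.exp (-2 * Λ n * x) / β n ^ 2) :
    Antitone (kernelSq Λ β) := fun x y hxy =>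
  (hsum y).tsum_le_tsum (fun n =>
    div_le_div_of_nonneg_right (Real.exp_le_exp.2 (by nlinarith [hΛ n])) (sq_nonneg _)) (hsum x)

theorem kernelSq_eq_add_kernelSq_succ (hΛ0 : Λ 0 = 0) {x : ℝ}
    (hsum : Summable fun n => Real.exp (-2 * Λ n * x) / β n ^ 2) :
    kernelSq Λ β x = (β 0 ^ 2)⁻¹ + kernelSq (fun n => Λ (n + 1)) (fun n => β (n + 1)) x := by
  rw [kernelSq, hsum.tsum_eq_zero_add, hΛ0, kernelSq]
  simp

theorem inv_sq_le_kernelSq (hΛ0 : 0 ≤ Λ 0) {x : ℝ} (hx : x ≤ 0)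
    (hsum : Summable fun n => Real.exp (-2 * Λ n * x) / β n ^ 2) :
    (β 0 ^ 2)⁻¹ ≤ kernelSq Λ β x := by
  calc (β 0 ^ 2)⁻¹ ≤ Real.exp (-2 * Λ 0 * x) / β 0 ^ 2 := by
        rw [inv_eq_one_div]; gcongr; exact Real.one_le_exp (by nlinarith)
    _ ≤ kernelSq Λ β x := hsum.le_tsum 0 fun n _ => by positivity

theorem exp_mul_kernelSq_le_kernelSq_sub (hΛ : Monotone Λ) {c : ℝ} (hc : 0 ≤ c) {x : ℝ}
    (hsum : ∀ x, Summable fun n => Real.exp (-2 * Λ n * x) / β n ^ 2) :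
    Real.exp (2 * Λ 0 * c) * kernelSq Λ β x ≤ kernelSq Λ β (x - c) := by
  rw [kernelSq, ← tsum_mul_left]
  refine ((hsum x).mul_left _).tsum_le_tsum (fun n => ?_) (hsum (x - c))
  have : Real.exp (2 * Λ 0 * c) ≤ Real.exp (2 * Λ n * c) := by
    gcongr; exact hΛ n.zero_le
  calc Real.exp (2 * Λ 0 * c) * (Real.exp (-2 * Λ n * x) / β n ^ 2)
      ≤ Real.exp (2 * Λ n * c) * (Real.exp (-2 * Λ n * x) / β n ^ 2) := by gcongr
    _ = Real.exp (-2 * Λ n * (x - c)) / β n ^ 2 := by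
        rw [← mul_div_assoc, ← Real.exp_add]; ring_nf

theorem exists_sub_le_of_kernelSq_le (hΛ : Monotone Λ) (hΛ0 : Λ 0 = 0) (hΛ1 : 0 < Λ 1)
    (hβ0 : β 0 ≠ 0) (hβ1 : β 1 ≠ 0) {B : ℝ} (hB : 0 ≤ B)
    (hsum : ∀ x, Summable fun n => Real.exp (-2 * Λ n * x) / β n ^ 2) :
    ∃ c, ∀ x y, y ≤ 0 → kernelSq Λ β x ≤ B * kernelSq Λ β y → y - c ≤ x := by
  set a := (β 0 ^ 2)⁻¹
  set b := (β 1 ^ 2)⁻¹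
  have ha : 0 < a := by positivity
  have hb : 0 < b := by positivity
  -- `e^{2 Λ 1 c} ≥ t + 1` for this `c`, and `t` is chosen so that `(t + 1) T y > B (a + T y)`
  -- as soon as `T y ≥ b`.
  set t := B * (1 + a / b)
  refine ⟨t / (2 * Λ 1), fun x y hy hxy => ?_⟩
  by_contra! hlt
  set T := kernelSq (fun n => Λ (n + 1)) (fun n => β (n + 1))
  have hsplit x : kernelSq Λ β x = a + T x := kernelSq_eq_add_kernelSq_succ hΛ0 (hsum x)
  have hsum' x : Summable fun n => Real.exp (-2 * Λ (n + 1) * x) / β (n + 1) ^ 2 :=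
    (summable_nat_add_iff 1).2 (hsum x)
  have hTy : b ≤ T y := inv_sq_le_kernelSq hΛ1.le hy (hsum' y)
  have hexp : t + 1 ≤ Real.exp (2 * Λ 1 * (t / (2 * Λ 1))) := by
    rw [mul_div_cancel₀ _ (by positivity)]; exact Real.add_one_le_exp t
  have hshift : (t + 1) * T y ≤ T (y - t / (2 * Λ 1)) :=
    (mul_le_mul_of_nonneg_right hexp (hb.le.trans hTy)).trans <|
      exp_mul_kernelSq_le_kernelSq_sub (fun m n h => hΛ (Nat.succ_le_succ h)) (by positivity) hsum'
  have hchain : a + (t + 1) * T y ≤ B * a + B * T y :=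
    calc a + (t + 1) * T y ≤ kernelSq Λ β (y - t / (2 * Λ 1)) := by rw [hsplit]; linarith
      _ ≤ kernelSq Λ β x := kernelSq_antitone (fun n => hΛ0 ▸ hΛ n.zero_le) hsum hlt.le
      _ ≤ B * kernelSq Λ β y := hxy
      _ = B * a + B * T y := by rw [hsplit, mul_add]
  have hBa : B * a ≤ B * (a / b) * T y := by
    rw [mul_assoc]; gcongr; rw [div_mul_eq_mul_div, le_div_iff₀ hb]; gcongr
  have ht : (t + 1) * T y = B * T y + B * (a / b) * T y + T y := by ring
  linarith

end KernelSq

theorem stmt_19_general (Λ : ℕ → ℝ) (β : ℕ → ℝ) (φ : ℂ → ℂ) (B : ℝ)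
    (hmono : StrictMono Λ)
    (htop : Tendsto Λ atTop atTop)
    (hL : IsBoundedUnder (· ≤ ·) atTop (fun n : ℕ => Real.log ((n : ℝ) + 1) / Λ n))
    (hβ : ∀ n, 0 < β n)
    (hE : Tendsto (fun n => Real.log (β n) / Λ n) atTop atTop)
    (hΛ0 : Λ 0 = 0)
    (hB : 1 < B)
    (hineq : ∀ w : ℂ,
      ∑' n, Real.exp (-2 * Λ n * (φ w).re) / (β n) ^ 2
        ≤ B * ∑' n, Real.exp (-2 * Λ n * w.re) / (β n) ^ 2) :
    ∃ M : ℝ, ∀ z : ℂ, z.re < 0 →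
      ‖Complex.exp ((Λ 1 : ℂ) * (z - φ z))‖ ≤ M := by
  have hΛ1 : 0 < Λ 1 := hΛ0 ▸ hmono Nat.zero_lt_one
  obtain ⟨c, hc⟩ := exists_sub_le_of_kernelSq_le hmono.monotone hΛ0 hΛ1 (hβ 0).ne' (hβ 1).ne'
    (zero_le_one.trans hB.le)
    (summable_exp_mul_div_sq (fun n => (hβ n).ne') (htop.eventually_gt_atTop 0) hL hE)
  refine ⟨Real.exp (Λ 1 * c), fun z hz => ?_⟩
  rw [Complex.norm_exp, Complex.re_ofReal_mul, sub_re, Real.exp_le_exp]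
  have hre := hc (φ z).re z.re hz.le (hineq z)
  exact mul_le_mul_of_nonneg_left (by linarith) hΛ1.le

/-- `λ_1 = 0` case: if `φ` is entire, `ψ(z) = z - φ(z)` is nonconstant, and
there is `B > 1` with `Σ β_n⁻² e^{-2 λ_n Re(φ w)} ≤ B Σ β_n⁻² e^{-2 λ_n Re w}` for all `w`
(i.e. `‖k_{φ(w)}‖² ≤ B ‖k_w‖²`), then `Q(z) = e^{λ_2 ψ(z)}` is bounded on the half-plane
`Re z < 0`. -/
theorem stmt_19 (Λ : ℕ → ℝ) (β : ℕ → ℝ) (φ : ℂ → ℂ) (B : ℝ)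
    (hmono : StrictMono Λ) (hpos : ∀ n, 0 ≤ Λ n)
    (htop : Tendsto Λ atTop atTop)
    (hL : IsBoundedUnder (· ≤ ·) atTop (fun n : ℕ => Real.log ((n : ℝ) + 1) / Λ n))
    (hβ : ∀ n, 0 < β n)
    (hE : Tendsto (fun n => Real.log (β n) / Λ n) atTop atTop)
    (hΛ0 : Λ 0 = 0)
    (hφ : Differentiable ℂ φ)
    (hψ : ¬ ∃ c : ℂ, ∀ z : ℂ, z - φ z = c)
    (hB : 1 < B)
    (hineq : ∀ w : ℂ,
      ∑' n, Real.exp (-2 * Λ n * (φ w).re) / (β n) ^ 2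
        ≤ B * ∑' n, Real.exp (-2 * Λ n * w.re) / (β n) ^ 2) :
    ∃ M : ℝ, ∀ z : ℂ, z.re < 0 →
      ‖Complex.exp ((Λ 1 : ℂ) * (z - φ z))‖ ≤ M :=
  stmt_19_general Λ β φ B hmono htop hL hβ hE hΛ0 hB hineq
end
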